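/- For i.i.d. positive random variables W_1, ..., W_k with E[log W_1] finite and E[W_1] = μ finite, the sequence L_k = E[log((1/k) Σ_{i=1}^k W_i)] is nondecreasing in k and bounded above by log μ; hence L_k converges to some limit L ≤ log μ. -/

import Mathlib

/-!
Among `k + 1` i.i.d. positive variables, each of the `k + 1` leave-one-out means is distributed
like the mean of `k` of them, and these means average to the mean of all `k + 1`. Concavity of
`log` (finite Jensen) therefore gives `L k ≤ L (k + 1)`. Jensen for the expectation gives
`L k ≤ log E[mean] = log m`, and a bounded monotone sequence converges.
-/

open MeasureTheory ProbabilityTheory Filter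

open Finset in
lemma sum_sum_erase_eq {ι : Type*} [DecidableEq ι] (s : Finset ι) (x : ι → ℝ) :
    ∑ i ∈ s, ∑ j ∈ s.erase i, x j = (#s - 1 : ℝ) * ∑ i ∈ s, x i := by
  rw [sum_congr rfl fun i hi => sum_erase_eq_sub hi, sum_sub_distrib, sum_const, nsmul_eq_mul]
  ring

open Finset in
lemma sum_log_mean_erase_le {ι : Type*} [DecidableEq ι] {s : Finset ι} {k : ℕ}
    (hs : #s = k + 1) (hk : 0 < k) {x : ι → ℝ} (hx : ∀ i ∈ s, 0 < x i) :
    ∑ i ∈ s, ((k : ℝ) + 1)⁻¹ * Real.log ((k : ℝ)⁻¹ * ∑ j ∈ s.erase i, x j)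
      ≤ Real.log (((k : ℝ) + 1)⁻¹ * ∑ i ∈ s, x i) := by
  have hkR : (0 : ℝ) < k := by exact_mod_cast hk
  have hmean : ∑ i ∈ s, ((k : ℝ) + 1)⁻¹ * ((k : ℝ)⁻¹ * ∑ j ∈ s.erase i, x j)
      = ((k : ℝ) + 1)⁻¹ * ∑ i ∈ s, x i := by
    rw [← mul_sum, ← mul_sum, sum_sum_erase_eq, hs]
    push_cast
    field_simp
    ring
  rw [← hmean]
  refine strictConcaveOn_log_Ioi.concaveOn.le_map_sum (fun _ _ => by positivity) ?_ fun i hi => ?_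
  · rw [sum_const, hs, nsmul_eq_mul]
    push_cast
    field_simp
  · have hcard : 0 < #(s.erase i) := by rw [card_erase_of_mem hi, hs]; omega
    exact mul_pos (inv_pos.2 hkR)
      (sum_pos (fun j hj => hx j (mem_of_mem_erase hj)) (card_pos.1 hcard))

lemma exists_le_tendsto_of_le_succ_of_le {L : ℕ → ℝ} {k₀ : ℕ} {b : ℝ}
    (hmono : ∀ n ≥ k₀, L n ≤ L (n + 1)) (hb : ∀ n ≥ k₀, L n ≤ b) :
    ∃ l ≤ b, Tendsto L atTop (nhds l) := by
  have hshift : Monotone fun n => L (n + k₀) :=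
    monotone_nat_of_le_succ fun n => by
      simpa only [Nat.add_right_comm n 1 k₀] using hmono (n + k₀) (Nat.le_add_left _ _)
  have hbdd : BddAbove (Set.range fun n => L (n + k₀)) :=
    ⟨b, by rintro _ ⟨n, rfl⟩; exact hb _ (Nat.le_add_left _ _)⟩
  refine ⟨⨆ n, L (n + k₀), ciSup_le fun n => hb _ (Nat.le_add_left _ _), ?_⟩
  exact (tendsto_add_atTop_iff_nat k₀).1 (tendsto_atTop_ciSup hshift hbdd)

lemma integral_log_le_log_integral {Ω : Type*} [MeasurableSpace Ω] {μ : Measure Ω}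
    [IsProbabilityMeasure μ] {X : Ω → ℝ} (hX : Integrable X μ) (hpos : ∀ᵐ ω ∂μ, 0 < X ω)
    (hlog : Integrable (fun ω => Real.log (X ω)) μ) :
    ∫ ω, Real.log (X ω) ∂μ ≤ Real.log (∫ ω, X ω ∂μ) := by
  set m := ∫ ω, X ω ∂μ
  have hm : 0 < m := by
    refine (integral_pos_iff_support_of_nonneg_ae (hpos.mono fun _ h => h.le) hX).2 ?_
    refine pos_iff_ne_zero.2 fun h0 => ?_
    obtain ⟨ω, hω, hω'⟩ := (hpos.and (measure_eq_zero_iff_ae_notMem.1 h0)).exists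
    exact hω' hω.ne'
  -- the tangent line of `log` at `m` lies above it
  have htangent : ∀ᵐ ω ∂μ, Real.log (X ω) ≤ X ω / m + (Real.log m - 1) := by
    filter_upwards [hpos] with ω hω
    have := Real.log_le_sub_one_of_pos (div_pos hω hm)
    rw [Real.log_div hω.ne' hm.ne'] at this
    linarith
  calc ∫ ω, Real.log (X ω) ∂μ ≤ ∫ ω, (X ω / m + (Real.log m - 1)) ∂μ :=
        integral_mono_ae hlog ((hX.div_const m).add (integrable_const _)) htangent
    _ = Real.log m := by
        rw [integral_add (hX.div_const m) (integrable_const _), integral_div, integral_const,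
          div_self hm.ne']
        simp

section IID

variable {Ω ι β : Type*} [MeasurableSpace Ω] {μ : Measure Ω} [MeasurableSpace β]
  {W : ι → Ω → β} {i₀ : ι}

lemma ProbabilityTheory.iIndepFun.map_precomp_eq_pi {κ : Type*} [Fintype κ]
    (hmeas : ∀ i, Measurable (W i)) (hindep : iIndepFun W μ) (hident : ∀ i, IdentDistrib (W i) (W i₀) μ μ)
    {f : κ → ι} (hf : f.Injective) :
    μ.map (fun ω j => W (f j) ω) = Measure.pi (fun _ : κ => μ.map (W i₀)) := by
  rw [(hindep.precomp hf).map_fun_eq_pi_map fun j => (hmeas (f j)).aemeasurable]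
  simp_rw [(hident _).map_eq]

lemma ProbabilityTheory.iIndepFun.identDistrib_sum_finset [AddCommMonoid β] [MeasurableAdd₂ β]
    (hmeas : ∀ i, Measurable (W i))
    (hindep : iIndepFun W μ) (hident : ∀ i, IdentDistrib (W i) (W i₀) μ μ)
    {s t : Finset ι} (hst : s.card = t.card) :
    IdentDistrib (fun ω => ∑ i ∈ s, W i ω) (fun ω => ∑ i ∈ t, W i ω) μ μ := by
  let e : s ≃ t := Fintype.equivOfCardEq (by simpa using hst)
  have hlaw : IdentDistrib (fun ω (j : s) => W j ω) (fun ω (j : s) => W (e j) ω) μ μ :=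
    ⟨(measurable_pi_lambda _ fun j => hmeas _).aemeasurable,
      (measurable_pi_lambda _ fun j => hmeas _).aemeasurable,
      (iIndepFun.map_precomp_eq_pi hmeas hindep hident Subtype.val_injective).trans
        (iIndepFun.map_precomp_eq_pi hmeas hindep hident
          (Subtype.val_injective.comp e.injective)).symm⟩
  have hsum := hlaw.comp (Finset.univ.measurable_sum fun j _ => measurable_pi_apply j)
  convert hsum using 2 with ω ω
  · exact (Finset.sum_coe_sort s fun i => W i ω).symm
  · simp only [Function.comp_apply]
    rw [e.sum_comp (fun j : t => W j ω), Finset.sum_coe_sort t fun i => W i ω]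

end IID

section LogMean

open Finset

variable {Ω : Type*} [MeasurableSpace Ω] {μ : Measure Ω} {W : ℕ → Ω → ℝ}

lemma integral_log_mean_le_succ (hmeas : ∀ i, Measurable (W i))
    (hpos : ∀ᵐ ω ∂μ, ∀ i, 0 < W i ω) (hindep : iIndepFun W μ)
    (hident : ∀ i, IdentDistrib (W i) (W 0) μ μ) {k : ℕ} (hk : 0 < k)
    (hint : Integrable (fun ω => Real.log ((k : ℝ)⁻¹ * ∑ i ∈ range k, W i ω)) μ)
    (hint' : Integrable
      (fun ω => Real.log (((k + 1 : ℕ) : ℝ)⁻¹ * ∑ i ∈ range (k + 1), W i ω)) μ) :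
    ∫ ω, Real.log ((k : ℝ)⁻¹ * ∑ i ∈ range k, W i ω) ∂μ
      ≤ ∫ ω, Real.log (((k + 1 : ℕ) : ℝ)⁻¹ * ∑ i ∈ range (k + 1), W i ω) ∂μ := by
  have hexch : ∀ i ∈ range (k + 1),
      IdentDistrib (fun ω => Real.log ((k : ℝ)⁻¹ * ∑ j ∈ (range (k + 1)).erase i, W j ω))
        (fun ω => Real.log ((k : ℝ)⁻¹ * ∑ j ∈ range k, W j ω)) μ μ := fun i hi =>
    (hindep.identDistrib_sum_finset hmeas hident (by simp [card_erase_of_mem hi])).comp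
      (u := fun x => Real.log ((k : ℝ)⁻¹ * x)) (by fun_prop)
  have hint_erase : ∀ i ∈ range (k + 1), Integrable
      (fun ω => ((k : ℝ) + 1)⁻¹ * Real.log ((k : ℝ)⁻¹ * ∑ j ∈ (range (k + 1)).erase i, W j ω))
      μ := fun i hi => ((hexch i hi).integrable_iff.2 hint).const_mul _
  calc ∫ ω, Real.log ((k : ℝ)⁻¹ * ∑ i ∈ range k, W i ω) ∂μ
      = ∫ ω, ∑ i ∈ range (k + 1),
          ((k : ℝ) + 1)⁻¹ * Real.log ((k : ℝ)⁻¹ * ∑ j ∈ (range (k + 1)).erase i, W j ω) ∂μ := by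
        rw [integral_finsetSum _ hint_erase, sum_congr rfl fun i hi => by
          rw [integral_const_mul, (hexch i hi).integral_eq], sum_const, card_range, nsmul_eq_mul]
        push_cast
        field_simp
    _ ≤ ∫ ω, Real.log (((k + 1 : ℕ) : ℝ)⁻¹ * ∑ i ∈ range (k + 1), W i ω) ∂μ := by
        refine integral_mono_ae (integrable_finsetSum _ hint_erase) hint' ?_
        filter_upwards [hpos] with ω hω
        push_cast
        exact sum_log_mean_erase_le (card_range _) hk fun i _ => hω i

lemma integral_log_mean_le_log_integral [IsProbabilityMeasure μ] (hpos : ∀ᵐ ω ∂μ, ∀ i, 0 < W i ω)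
    (hInt : ∀ i, Integrable (W i) μ) (hident : ∀ i, IdentDistrib (W i) (W 0) μ μ)
    {k : ℕ} (hk : 0 < k)
    (hint : Integrable (fun ω => Real.log ((k : ℝ)⁻¹ * ∑ i ∈ range k, W i ω)) μ) :
    ∫ ω, Real.log ((k : ℝ)⁻¹ * ∑ i ∈ range k, W i ω) ∂μ ≤ Real.log (∫ ω, W 0 ω ∂μ) := by
  have hmean_int : Integrable (fun ω => (k : ℝ)⁻¹ * ∑ i ∈ range k, W i ω) μ :=
    (integrable_finsetSum _ fun i _ => hInt i).const_mul _
  have hmean_pos : ∀ᵐ ω ∂μ, 0 < (k : ℝ)⁻¹ * ∑ i ∈ range k, W i ω := by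
    filter_upwards [hpos] with ω hω
    have : 0 < ∑ i ∈ range k, W i ω := sum_pos (fun i _ => hω i) (nonempty_range_iff.2 hk.ne')
    positivity
  calc ∫ ω, Real.log ((k : ℝ)⁻¹ * ∑ i ∈ range k, W i ω) ∂μ
      ≤ Real.log (∫ ω, (k : ℝ)⁻¹ * ∑ i ∈ range k, W i ω ∂μ) :=
        integral_log_le_log_integral hmean_int hmean_pos hint
    _ = Real.log (∫ ω, W 0 ω ∂μ) := by
        rw [integral_const_mul, integral_finsetSum _ fun i _ => hInt i,
          sum_congr rfl fun i _ => (hident i).integral_eq, sum_const, card_range, nsmul_eq_mul]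
        have : (k : ℝ) ≠ 0 := by positivity
        field_simp

end LogMean

theorem stmt11_general {Ω : Type*} [MeasurableSpace Ω] (μ : Measure Ω) [IsProbabilityMeasure μ]
    (W : ℕ → Ω → ℝ) (hmeas : ∀ i, Measurable (W i))
    (hpos : ∀ i, ∀ᵐ ω ∂μ, 0 < W i ω)
    (hInt : ∀ i, Integrable (W i) μ)
    (hindep : iIndepFun W μ)
    (hident : ∀ i, IdentDistrib (W i) (W 0) μ μ)
    (m : ℝ) (hmean : ∫ ω, W 0 ω ∂μ = m)
    (L : ℕ → ℝ)
    (hL : ∀ k, L k = ∫ ω, Real.log ((k : ℝ)⁻¹ * ∑ i ∈ Finset.range k, W i ω) ∂μ)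
    (hLint : ∀ k : ℕ, 0 < k →
      Integrable (fun ω => Real.log ((k : ℝ)⁻¹ * ∑ i ∈ Finset.range k, W i ω)) μ) :
    (∀ j k : ℕ, 0 < j → j ≤ k → L j ≤ L k)
      ∧ (∀ k : ℕ, 0 < k → L k ≤ Real.log m)
      ∧ ∃ l : ℝ, l ≤ Real.log m ∧ Tendsto L atTop (nhds l) := by
  have hpos_all : ∀ᵐ ω ∂μ, ∀ i, 0 < W i ω := ae_all_iff.2 hpos
  have hstep : ∀ k ≥ 1, L k ≤ L (k + 1) := fun k hk => by
    rw [hL, hL]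
    exact integral_log_mean_le_succ hmeas hpos_all hindep hident hk (hLint k hk)
      (hLint (k + 1) k.succ_pos)
  have hbound : ∀ k ≥ 1, L k ≤ Real.log m := fun k hk => by
    rw [hL, ← hmean]
    exact integral_log_mean_le_log_integral hpos_all hInt hident hk (hLint k hk)
  exact ⟨fun j k hj hjk => monotoneOn_nat_Ici_of_le_succ hstep hj (hj.trans_le hjk) hjk,
    hbound, exists_le_tendsto_of_le_succ_of_le hstep hbound⟩

theorem stmt11 {Ω : Type*} [MeasurableSpace Ω] (μ : Measure Ω) [IsProbabilityMeasure μ]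
    (W : ℕ → Ω → ℝ) (hmeas : ∀ i, Measurable (W i))
    (hpos : ∀ i, ∀ᵐ ω ∂μ, 0 < W i ω)
    (hInt : ∀ i, Integrable (W i) μ)
    (hLogInt : Integrable (fun ω => Real.log (W 0 ω)) μ)
    (hindep : iIndepFun W μ)
    (hident : ∀ i, IdentDistrib (W i) (W 0) μ μ)
    (m : ℝ) (hmean : ∫ ω, W 0 ω ∂μ = m)
    (L : ℕ → ℝ)
    (hL : ∀ k, L k = ∫ ω, Real.log ((k : ℝ)⁻¹ * ∑ i ∈ Finset.range k, W i ω) ∂μ)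
    (hLint : ∀ k : ℕ, 0 < k →
      Integrable (fun ω => Real.log ((k : ℝ)⁻¹ * ∑ i ∈ Finset.range k, W i ω)) μ) :
    (∀ j k : ℕ, 0 < j → j ≤ k → L j ≤ L k)
      ∧ (∀ k : ℕ, 0 < k → L k ≤ Real.log m)
      ∧ ∃ l : ℝ, l ≤ Real.log m ∧ Tendsto L atTop (nhds l) :=
  stmt11_general μ W hmeas hpos hInt hindep hident m hmean L hL hLint
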